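/- A blockchain tree is globally decisive (every block is accepted or rejected, and not both) if and only if it is infinite and has exactly one infinite branch. -/

import Mathlib

/-!
Every block whose subtree is infinite lies on an infinite branch: König's lemma gives an infinite
downward ray from it, and following parents up to the root extends the ray to a branch.
Blocks with finite subtree are rejected, and in an infinite tree no block is both accepted and
rejected. If there is a single branch, each of its blocks is accepted, since all siblings of the
next block on the branch have finite subtrees. Conversely, in a decisive tree two accepted blocks
share descendants and are therefore comparable, so two branches cannot split at any node.
-/

/-- `c` is a child of `b` in the blockchain tree given by `parent`. -/
def ChildOf {B : Type} (parent : B → Option B) (c b : B) : Prop := parent c = some b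

/-- `b` is a (strict) ancestor of `c`. -/
def Anc {B : Type} (parent : B → Option B) (b c : B) : Prop :=
  Relation.TransGen (ChildOf parent) c b

/-- `b` is an ancestor of `c` or equal to it. -/
def AncOrEq {B : Type} (parent : B → Option B) (b c : B) : Prop :=
  Relation.ReflTransGen (ChildOf parent) c b

/-- An infinite branch: a path from the root following the child relation. -/
def InfBranch {B : Type} (parent : B → Option B) (root : B) (f : ℕ → B) : Prop :=
  f 0 = root ∧ ∀ n, parent (f (n + 1)) = some (f n)

/-- A block is accepted if it is an ancestor of (or equal to) all but finitely many blocks. -/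
def Accepted {B : Type} (parent : B → Option B) (b : B) : Prop :=
  {c | ¬ AncOrEq parent b c}.Finite

/-- A block is rejected if it is an ancestor of only finitely many blocks. -/
def Rejected {B : Type} (parent : B → Option B) (b : B) : Prop :=
  {c | Anc parent b c}.Finite

/-- Globally decisive: every block is accepted or rejected but not both. -/
def GloballyDecisive {B : Type} (parent : B → Option B) : Prop :=
  ∀ b, (Accepted parent b ∨ Rejected parent b) ∧ ¬ (Accepted parent b ∧ Rejected parent b)

lemma exists_seq_of_forall_mem_exists {α : Type*} {S : Set α} {r : α → α → Prop}
    (h : ∀ x ∈ S, ∃ y ∈ S, r x y) {a : α} (ha : a ∈ S) :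
    ∃ f : ℕ → α, f 0 = a ∧ ∀ n, r (f n) (f (n + 1)) := by
  choose next hnextS hnext using h
  let g : ℕ → S := fun n => Nat.rec ⟨a, ha⟩ (fun _ x => ⟨next x x.2, hnextS x x.2⟩) n
  exact ⟨fun n => (g n).1, rfl, fun n => hnext _ (g n).2⟩

namespace Blockchain

variable {B : Type} {parent : B → Option B}

variable (parent) in
def descendants (b : B) : Set B := {c | AncOrEq parent b c}

variable (parent) in
def IsRay (f : ℕ → B) : Prop := ∀ n, parent (f (n + 1)) = some (f n)

variable (parent) in
def Acyclic : Prop := ∀ b, ¬ Anc parent b b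

lemma accepted_iff {b : B} : Accepted parent b ↔ (descendants parent b)ᶜ.Finite := Iff.rfl

lemma rejected_iff {b : B} : Rejected parent b ↔ (descendants parent b).Finite := by
  have : descendants parent b = insert b {c | Anc parent b c} := by
    ext c
    rw [Set.mem_insert_iff, eq_comm]
    exact Relation.reflTransGen_iff_eq_or_transGen
  rw [this, Set.finite_insert]
  rfl

lemma not_accepted_and_rejected [Infinite B] (b : B) :
    ¬ (Accepted parent b ∧ Rejected parent b) := by
  rintro ⟨hacc, hrej⟩
  rw [accepted_iff] at hacc
  rw [rejected_iff] at hrej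
  exact Set.infinite_univ (by simpa only [Set.union_compl_self] using hrej.union hacc)

lemma globallyDecisive_iff [Nonempty B] :
    GloballyDecisive parent ↔ Infinite B ∧ ∀ b, Accepted parent b ∨ Rejected parent b := by
  refine ⟨fun h => ⟨?_, fun b => (h b).1⟩, fun ⟨_, h⟩ b => ⟨h b, not_accepted_and_rejected b⟩⟩
  by_contra hfin
  rw [not_infinite_iff_finite] at hfin
  exact (h (Classical.arbitrary B)).2 ⟨Set.toFinite _, Set.toFinite _⟩

lemma ancOrEq_total {a b c : B} (ha : AncOrEq parent a c) (hb : AncOrEq parent b c) :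
    AncOrEq parent a b ∨ AncOrEq parent b a :=
  (ha.total_of_right_unique (fun _ _ _ h₁ h₂ => Option.some.inj (h₁.symm.trans h₂)) hb).symm

lemma ancOrEq_total_of_accepted [Infinite B] {a b : B} (ha : Accepted parent a)
    (hb : Accepted parent b) : AncOrEq parent a b ∨ AncOrEq parent b a := by
  have hcompl : (descendants parent a ∩ descendants parent b)ᶜ.Finite := by
    rw [Set.compl_inter]
    exact ha.union hb
  have hinter := hcompl.infinite_compl
  rw [compl_compl] at hinter
  obtain ⟨c, hca, hcb⟩ := hinter.nonempty
  exact ancOrEq_total hca hcb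

lemma descendants_subset (b : B) :
    descendants parent b ⊆ insert b (⋃ d ∈ {d | parent d = some b}, descendants parent d) := by
  intro c hc
  rcases Relation.ReflTransGen.cases_tail hc with rfl | ⟨d, hcd, hdb⟩
  · exact Set.mem_insert _ _
  · exact Set.mem_insert_of_mem _ (Set.mem_biUnion hdb hcd)

lemma exists_child_infinite_descendants {x : B} (hfin : {c | parent c = some x}.Finite)
    (hx : (descendants parent x).Infinite) :
    ∃ y, parent y = some x ∧ (descendants parent y).Infinite := by
  by_contra! h
  exact hx (((hfin.biUnion h).insert x).subset (descendants_subset x))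

theorem exists_isRay (hfin : ∀ b : B, {c | parent c = some b}.Finite) {x : B}
    (hx : (descendants parent x).Infinite) : ∃ f, f 0 = x ∧ IsRay parent f :=
  exists_seq_of_forall_mem_exists (S := {y | (descendants parent y).Infinite})
    (r := fun y z => parent z = some y)
    (fun y hy => (exists_child_infinite_descendants (hfin y) hy).imp fun _ h => h.symm) hx

lemma accepted_of_parent_eq {b c : B} (hfin : {d | parent d = some b}.Finite)
    (hb : Accepted parent b) (hc : parent c = some b)
    (hsib : ∀ d, parent d = some b → d ≠ c → (descendants parent d).Finite) :
    Accepted parent c := by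
  rw [accepted_iff] at hb ⊢
  refine ((hb.insert b).union ((hfin.sdiff (t := {c})).biUnion fun d hd =>
    hsib d hd.1 hd.2)).subset fun x hx => ?_
  by_cases hbx : x ∈ descendants parent b
  · rcases descendants_subset b hbx with rfl | hx'
    · exact .inl (Set.mem_insert x _)
    · obtain ⟨d, hd, hxd⟩ := Set.mem_iUnion₂.mp hx'
      refine .inr (Set.mem_biUnion ⟨hd, fun hdc => hx ?_⟩ hxd)
      rwa [← Set.mem_singleton_iff.mp hdc]
  · exact .inl (Set.mem_insert_of_mem b hbx)

lemma acyclic_of_reachable {root : B} (hroot : parent root = none)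
    (hreach : ∀ b, AncOrEq parent root b) : Acyclic parent := by
  have hwf : WellFounded (flip (ChildOf parent)) := by
    refine ⟨fun b => ?_⟩
    induction hreach b using Relation.ReflTransGen.head_induction_on with
    | refl => exact ⟨root, fun y hy => (Option.some_ne_none _ (hy.symm.trans hroot)).elim⟩
    | head hac _ ih =>
      refine ⟨_, fun y hy => ?_⟩
      rwa [Option.some.inj (hac.symm.trans hy)] at ih
  exact fun b h => hwf.transGen.irrefl.irrefl b (Relation.transGen_swap.mpr h)

lemma eq_of_ancOrEq_of_parent_eq (hacyc : Acyclic parent) {c c' : B}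
    (hp : parent c = parent c') (h : AncOrEq parent c c') : c = c' := by
  rcases h.cases_head with h | ⟨d, hd, hdc⟩
  · exact h.symm
  · exact absurd (Relation.TransGen.head' (r := ChildOf parent) (hp.trans hd) hdc) (hacyc c)

namespace IsRay

variable {f : ℕ → B}

lemma ancOrEq (hf : IsRay parent f) {m n : ℕ} (h : m ≤ n) : AncOrEq parent (f m) (f n) := by
  induction n, h using Nat.le_induction with
  | base => exact Relation.ReflTransGen.refl
  | succ n _ ih => exact Relation.ReflTransGen.head (hf n) ih

lemma anc (hf : IsRay parent f) {m n : ℕ} (h : m < n) : Anc parent (f m) (f n) :=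
  Relation.TransGen.tail' (hf.ancOrEq h) (hf m)

lemma injective (hacyc : Acyclic parent) (hf : IsRay parent f) : Function.Injective f :=
  .of_lt_imp_ne fun _ _ h heq => hacyc _ (heq ▸ hf.anc h)

lemma infinite_descendants (hacyc : Acyclic parent) (hf : IsRay parent f) (n : ℕ) :
    (descendants parent (f n)).Infinite :=
  Set.infinite_of_injective_forall_mem (f := fun k => f (n + k))
    (fun _ _ h => Nat.add_left_cancel (hf.injective hacyc h)) fun _ => hf.ancOrEq (by omega)

end IsRay

theorem exists_infBranch_of_isRay {root : B} {h : ℕ → B} (hreach : AncOrEq parent root (h 0))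
    (hh : IsRay parent h) : ∃ f n, InfBranch parent root f ∧ ∀ m, f (n + m) = h m := by
  generalize hx : h 0 = x at hreach
  induction hreach using Relation.ReflTransGen.head_induction_on generalizing h with
  | refl => exact ⟨h, 0, ⟨hx, hh⟩, fun m => by rw [Nat.zero_add]⟩
  | @head a c hac _ ih =>
    let h' : ℕ → B := fun m => Nat.casesOn m c h
    have hh' : IsRay parent h' := fun
      | 0 => show parent (h 0) = some c by rw [hx]; exact hac
      | m + 1 => hh m
    obtain ⟨f, n, hf, hfh⟩ := ih hh' rfl
    exact ⟨f, n + 1, hf, fun m => by rw [Nat.succ_add]; exact hfh (m + 1)⟩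

section UniqueBranch

variable {root : B} {f : ℕ → B}

lemma mem_range_of_infinite_descendants (hreach : ∀ b, AncOrEq parent root b)
    (hfin : ∀ b : B, {c | parent c = some b}.Finite)
    (huniq : ∀ g, InfBranch parent root g → g = f) {x : B}
    (hx : (descendants parent x).Infinite) : x ∈ Set.range f := by
  obtain ⟨h, rfl, hh⟩ := exists_isRay hfin hx
  obtain ⟨g, n, hg, hgh⟩ := exists_infBranch_of_isRay (hreach (h 0)) hh
  exact ⟨n, huniq g hg ▸ hgh 0⟩

lemma InfBranch.accepted (hroot : parent root = none) (hreach : ∀ b, AncOrEq parent root b)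
    (hfin : ∀ b : B, {c | parent c = some b}.Finite) (hf : InfBranch parent root f)
    (huniq : ∀ g, InfBranch parent root g → g = f) (n : ℕ) : Accepted parent (f n) := by
  induction n with
  | zero => exact Set.finite_empty.subset fun c hc => hc (hf.1 ▸ hreach c)
  | succ n ih =>
    refine accepted_of_parent_eq (hfin _) ih (hf.2 n) fun d hd hne => ?_
    by_contra hinf
    obtain ⟨m, rfl⟩ := mem_range_of_infinite_descendants hreach hfin huniq hinf
    cases m with
    | zero => exact Option.some_ne_none _ (hd.symm.trans (hf.1 ▸ hroot))
    | succ k =>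
      have hkn : k = n := IsRay.injective (acyclic_of_reachable hroot hreach) hf.2
        (Option.some.inj ((hf.2 k).symm.trans hd))
      exact hne (hkn ▸ rfl)

lemma InfBranch.eq [Infinite B] (hacyc : Acyclic parent)
    (hacc : ∀ b, (descendants parent b).Infinite → Accepted parent b) {g : ℕ → B}
    (hf : InfBranch parent root f) (hg : InfBranch parent root g) : f = g := by
  funext n
  induction n with
  | zero => exact hf.1.trans hg.1.symm
  | succ n ih =>
    have hp : parent (f (n + 1)) = parent (g (n + 1)) := by rw [hf.2, hg.2, ih]
    rcases ancOrEq_total_of_accepted (hacc _ (IsRay.infinite_descendants hacyc hf.2 (n + 1)))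
      (hacc _ (IsRay.infinite_descendants hacyc hg.2 (n + 1))) with h | h
    · exact eq_of_ancOrEq_of_parent_eq hacyc hp h
    · exact (eq_of_ancOrEq_of_parent_eq hacyc hp.symm h).symm

end UniqueBranch

end Blockchain

open Blockchain in
/-- A blockchain tree is globally decisive iff it is infinite and has exactly
one infinite branch. -/
theorem stmt_4 {B : Type} (root : B) (parent : B → Option B) (N : ℕ)
    (hroot : parent root = none)
    (hreach : ∀ b, AncOrEq parent root b)
    (harity : ∀ b : B, {c | parent c = some b}.Finite ∧ {c | parent c = some b}.ncard ≤ N) :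
    GloballyDecisive parent ↔ (Infinite B ∧ ∃! f : ℕ → B, InfBranch parent root f) := by
  have : Nonempty B := ⟨root⟩
  have hfin b := (harity b).1
  rw [globallyDecisive_iff]
  refine and_congr_right fun _ => ⟨fun hdec => ?_, fun ⟨f, hf, huniq⟩ b => ?_⟩
  · have hacc b (hb : (descendants parent b).Infinite) : Accepted parent b :=
      (hdec b).resolve_right (mt rejected_iff.mp hb)
    obtain ⟨f, hf0, hf⟩ := exists_isRay hfin (Set.infinite_univ.mono fun c _ => hreach c)
    exact ⟨f, ⟨hf0, hf⟩, fun g hg =>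
      InfBranch.eq (acyclic_of_reachable hroot hreach) hacc hg ⟨hf0, hf⟩⟩
  · by_cases hb : (descendants parent b).Finite
    · exact .inr (rejected_iff.mpr hb)
    · obtain ⟨n, rfl⟩ := mem_range_of_infinite_descendants hreach hfin huniq hb
      exact .inl (hf.accepted hroot hreach hfin huniq n)
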